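/- arXiv:1310.0199 — 2 statements merged into one kernel-verified Lean document; each statement's English description precedes it below -/
import Mathlib

section
/- Let Σ be a hyperplane of PG(n,q) (Σ ≅ PG(n-1,q)) with n ≥ 2. For every k with 3 ≤ k ≤ q^n + 2, there exists a k-cycle embedded in PG(n,q) having exactly two of its vertices in Σ and exactly one of its edges being a line contained in Σ. -/
/-
Identify `PG(n, q)` with the projective space of `K × F`, where `K` is the field with `q ^ n`
elements, so that `Σ` becomes the hyperplane `K × 0` and the remaining points are the affine
points `(x : 1)`. For a primitive element `g` of `K` the affine points `0, g, g², …, g ^ l`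
(`l = k - 3`) are distinct, and consecutive ones span pairwise distinct lines: the chord through
`g ^ j` and `g ^ (j + 1)` is `g ^ j` times the line `L` through `1` and `g`, and `L` is not fixed
by a nontrivial power of `g` because `g ∉ F`. The path is closed through two points at infinity,
`(d : 0)` joined to `0` and `(u : 0)` joined to `g ^ l`. A chord `j ≠ 0` through `g ^ l` yields
the point `g ^ (l - j) ≠ 1` of `L`, so at most `q` chords pass through `g ^ l`, and since
`q (q - 1) + 1 < q ^ n` some direction `u` avoids all of them; `d` only has to avoid `g` and `u`.
-/

open Module Finset Submodule

theorem FiniteField.exists_algebra_card_eq_pow (F : Type*) [Field F] [Fintype F] {n : ℕ}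
    (hn : n ≠ 0) :
    ∃ (K : Type) (_ : Field K) (_ : Fintype K) (_ : Algebra F K),
      Fintype.card K = Fintype.card F ^ n := by
  obtain ⟨p, _⟩ := CharP.exists F
  obtain ⟨e, hp, hF⟩ := FiniteField.card F p
  have := Fact.mk hp
  let := ZMod.algebra F p
  have hFrank : finrank (ZMod p) F = e :=
    Nat.pow_right_injective hp.two_le (by simp only [FiniteField.pow_finrank_eq_card, hF])
  have hen : (e : ℕ) * n ≠ 0 := mul_ne_zero e.ne_zero hn
  obtain ⟨φ⟩ := FiniteField.nonempty_algHom_of_finrank_dvd (F := ZMod p) (K := F)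
    (L := GaloisField p (e * n))
    (by rw [hFrank, GaloisField.finrank p hen]; exact dvd_mul_right _ _)
  let := φ.toRingHom.toAlgebra
  refine ⟨GaloisField p (e * n), inferInstance, Fintype.ofFinite _, inferInstance, ?_⟩
  rw [Fintype.card_eq_nat_card, GaloisField.card p _ hen, hF, pow_mul]

theorem FiniteField.exists_linearIndependent_one_orderOf_eq {F K : Type*} [Field F] [Field K]
    [Algebra F K] [Fintype F] [Fintype K] (hFK : Fintype.card F < Fintype.card K) :
    ∃ g : K, LinearIndependent F ![1, g] ∧ orderOf g = Fintype.card K - 1 := by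
  obtain ⟨γ, hγ⟩ := IsCyclic.exists_ofOrder_eq_natCard (α := Kˣ)
  have hord : orderOf (γ : K) = Fintype.card K - 1 := by
    rw [orderOf_units, hγ, Nat.card_units, Nat.card_eq_fintype_card]
  refine ⟨γ, (LinearIndependent.pair_iff' one_ne_zero).2 fun a ha => ?_, hord⟩
  have ha0 : a ≠ 0 := by
    rintro rfl
    exact γ.ne_zero (by simpa using ha.symm)
  have hpow : (γ : K) ^ (Fintype.card F - 1) = 1 := by
    rw [← ha, Algebra.smul_def, mul_one, ← map_pow, FiniteField.pow_card_sub_one_eq_one a ha0,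
      map_one]
  have hdvd : Fintype.card K - 1 ∣ Fintype.card F - 1 := hord ▸ orderOf_dvd_of_pow_eq_one hpow
  have hq := Fintype.one_lt_card (α := F)
  have := Nat.le_of_dvd (by omega) hdvd
  omega

theorem pow_ne_pow_of_sub_lt_orderOf {M₀ : Type*} [MonoidWithZero M₀] [IsCancelMulZero M₀]
    {g : M₀} (hg : g ≠ 0) {a b : ℕ} (hab : a < b) (hb : b - a < orderOf g) : g ^ a ≠ g ^ b := by
  intro h
  refine pow_ne_one_of_lt_orderOf (by omega) hb (mul_left_cancel₀ (pow_ne_zero a hg) ?_)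
  rw [← pow_add, Nat.add_sub_cancel' hab.le, mul_one, h]

theorem exists_ne_zero_forall_notMem_span_singleton {F V : Type*} [Field F] [Fintype F]
    [AddCommGroup V] [Module F V] [Fintype V] (B : Finset V)
    (hB : #B * (Fintype.card F - 1) + 1 < Fintype.card V) :
    ∃ u : V, u ≠ 0 ∧ ∀ b ∈ B, u ∉ span F {b} := by
  classical
  set T := insert 0 ((B ×ˢ univ.erase (0 : F)).image fun p => p.2 • p.1)
  have hT : #T < #(univ : Finset V) := by
    calc #T ≤ #((B ×ˢ univ.erase (0 : F)).image fun p => p.2 • p.1) + 1 := card_insert_le _ _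
      _ ≤ #B * (Fintype.card F - 1) + 1 := by
        gcongr
        exact card_image_le.trans
          (by rw [card_product, card_erase_of_mem (mem_univ _), card_univ])
      _ < #(univ : Finset V) := by rwa [card_univ]
  obtain ⟨u, -, hu⟩ := exists_mem_notMem_of_card_lt_card hT
  have hu0 : u ≠ 0 := fun h => hu (h ▸ mem_insert_self _ _)
  refine ⟨u, hu0, fun b hb hub => hu (mem_insert_of_mem ?_)⟩
  obtain ⟨c, rfl⟩ := mem_span_singleton.1 hub
  have hc : c ≠ 0 := by rintro rfl; exact hu0 (zero_smul _ _)
  exact mem_image.2 ⟨(b, c), mem_product.2 ⟨hb, mem_erase.2 ⟨hc, mem_univ _⟩⟩, rfl⟩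

theorem Submodule.span_pair_eq_span_pair_sub {R M : Type*} [Ring R] [AddCommGroup M]
    [Module R M] (a b : M) : span R {a, b} = span R {a, b - a} := by
  have ha : ∀ c : M, a ∈ span R {a, c} := fun c => subset_span (by simp)
  have hc : ∀ c : M, c ∈ span R {a, c} := fun c => subset_span (by simp)
  apply le_antisymm <;> rw [span_le, Set.insert_subset_iff, Set.singleton_subset_iff]
  · exact ⟨ha _, by simpa using add_mem (hc (b - a)) (ha (b - a))⟩
  · exact ⟨ha _, sub_mem (hc b) (ha b)⟩

theorem Submodule.exists_linearEquiv_map_eq {F V W : Type*} [Field F] [AddCommGroup V]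
    [Module F V] [AddCommGroup W] [Module F W] [FiniteDimensional F V] [FiniteDimensional F W]
    (hVW : finrank F V = finrank F W) {p : Submodule F V} {p' : Submodule F W}
    (hp : finrank F p = finrank F p') : ∃ e : V ≃ₗ[F] W, p.map (e : V →ₗ[F] W) = p' := by
  obtain ⟨c, hc⟩ := p.exists_isCompl
  obtain ⟨c', hc'⟩ := p'.exists_isCompl
  have hcc : finrank F c = finrank F c' := by
    have := finrank_add_eq_of_isCompl hc
    have := finrank_add_eq_of_isCompl hc'
    omega
  let e := (prodEquivOfIsCompl p c hc).symm ≪≫ₗ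
    (LinearEquiv.ofFinrankEq p p' hp).prodCongr (LinearEquiv.ofFinrankEq c c' hcc) ≪≫ₗ
    prodEquivOfIsCompl p' c' hc'
  refine ⟨e, eq_of_le_of_finrank_le ?_ (by rw [LinearEquiv.finrank_map_eq, hp])⟩
  rintro _ ⟨x, hx, rfl⟩
  have hsymm := prodEquivOfIsCompl_symm_apply_left (h := hc) (x := ⟨x, hx⟩)
  simp only [LinearEquiv.coe_coe, LinearEquiv.trans_apply, e, hsymm]
  simp

section Cycle

variable {F V W : Type*} [Field F] [AddCommGroup V] [Module F V] [AddCommGroup W] [Module F W]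

def IsCycleMeetingInEdge (S : Submodule F V) {k : ℕ} (hk : 1 < k) (f : Fin k → Submodule F V) :
    Prop :=
  (∀ i, finrank F (f i) = 1) ∧ Function.Injective f ∧
    Function.Injective (fun i => f i ⊔ f (i + ⟨1, hk⟩)) ∧
    {i | f i ≤ S}.ncard = 2 ∧ {i | f i ⊔ f (i + ⟨1, hk⟩) ≤ S}.ncard = 1

theorem IsCycleMeetingInEdge.map {S : Submodule F V} {k : ℕ} {hk : 1 < k}
    {f : Fin k → Submodule F V} (h : IsCycleMeetingInEdge S hk f) (e : V ≃ₗ[F] W) :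
    IsCycleMeetingInEdge (S.map (e : V →ₗ[F] W)) hk
      (fun i => (f i).map (e : V →ₗ[F] W)) := by
  obtain ⟨hrank, hinj, hedge, hS₂, hS₁⟩ := h
  have hmap := map_injective_of_injective (f := (e : V →ₗ[F] W)) e.injective
  have hle : ∀ P : Submodule F V, P.map (e : V →ₗ[F] W) ≤ S.map (e : V →ₗ[F] W) ↔ P ≤ S :=
    fun P => map_le_map_iff_of_injective (f := (e : V →ₗ[F] W)) e.injective P S
  refine ⟨fun i => by rw [LinearEquiv.finrank_map_eq, hrank], hmap.comp hinj, ?_, ?_, ?_⟩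
  · simp only [← Submodule.map_sup]
    exact hmap.comp hedge
  · simpa only [hle] using hS₂
  · simpa only [← Submodule.map_sup, hle] using hS₁

theorem isCycleMeetingInEdge_span_singleton {S : Submodule F V} {k : ℕ} (hk : 3 ≤ k)
    (v : ℕ → V)
    (hv : ∀ i < k, v i ≠ 0)
    (hvert : ∀ i j, i < j → j < k → span F {v i} ≠ span F {v j})
    (hpath : ∀ i j, i < j → j + 1 < k → span F {v i, v (i + 1)} ≠ span F {v j, v (j + 1)})
    (hclose : ∀ i, i + 1 < k → span F {v i, v (i + 1)} ≠ span F {v (k - 1), v 0})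
    (hS : ∀ i < k, v i ∈ S ↔ i < 2) :
    IsCycleMeetingInEdge S (by omega : 1 < k) (fun i => span F {v i}) := by
  have hsucc : ∀ i : Fin k, span F {v i} ⊔ span F {v ↑(i + ⟨1, by omega⟩)} =
      span F {v i, v ((i + 1) % k)} := fun i => by
    rw [Fin.val_add, span_insert]
  refine ⟨fun i => finrank_span_singleton (hv i i.isLt),
    Function.Injective.of_lt_imp_ne fun i j hij => hvert i j hij j.isLt, ?_, ?_, ?_⟩
  · simp only [hsucc]
    refine Function.Injective.of_lt_imp_ne fun i j (hij : i.val < j.val) => ?_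
    rw [Nat.mod_eq_of_lt (by omega : (i : ℕ) + 1 < k)]
    rcases Nat.lt_or_ge ((j : ℕ) + 1) k with hj | hj
    · rw [Nat.mod_eq_of_lt hj]
      exact hpath i j hij hj
    · rw [show (j : ℕ) = k - 1 by omega, Nat.sub_add_cancel (by omega), Nat.mod_self]
      exact hclose i (by omega)
  · have : {i : Fin k | span F {v i} ≤ S} = {⟨0, by omega⟩, ⟨1, by omega⟩} := by
      ext i
      simp only [Set.mem_ofPred_eq, span_singleton_le_iff_mem, hS i i.isLt, Set.mem_insert_iff,
        Set.mem_singleton_iff, Fin.ext_iff]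
      omega
    rw [this, Set.ncard_pair (by simp [Fin.ext_iff])]
  · have : {i : Fin k | span F {v i} ⊔ span F {v ↑(i + ⟨1, by omega⟩)} ≤ S} =
        {⟨0, by omega⟩} := by
      ext i
      simp only [hsucc, Set.mem_ofPred_eq, span_le, Set.insert_subset_iff,
        Set.singleton_subset_iff, SetLike.mem_coe, hS i i.isLt,
        hS _ (Nat.mod_lt _ (by omega : 0 < k)), Set.mem_singleton_iff, Fin.ext_iff]
      rcases Nat.lt_or_ge ((i : ℕ) + 1) k with h | h
      · rw [Nat.mod_eq_of_lt h]
        omega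
      · rw [show (i : ℕ) + 1 = k by omega, Nat.mod_self]
        omega
    rw [this, Set.ncard_singleton]

end Cycle

section ProjectiveModel

variable {F K : Type*} [Field F] [Field K] [Algebra F K]

variable (F) in
def affineLine (x δ : K) : Submodule F (K × F) := span F {(x, 1), (δ, 0)}

theorem mem_affineLine {x δ z : K} {c : F} :
    (z, c) ∈ affineLine F x δ ↔ ∃ t : F, z = c • x + t • δ := by
  simp only [affineLine, mem_span_pair, Prod.ext_iff, Prod.smul_mk, Prod.fst_add, Prod.snd_add,
    smul_eq_mul, mul_one, mul_zero, add_zero]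
  constructor
  · rintro ⟨a, b, h, rfl⟩
    exact ⟨b, h.symm⟩
  · rintro ⟨t, rfl⟩
    exact ⟨c, t, rfl, rfl⟩

theorem left_mem_affineLine (x δ : K) : ((x, 1) : K × F) ∈ affineLine F x δ :=
  subset_span (by simp)

theorem right_mem_affineLine (x δ : K) : ((δ, 0) : K × F) ∈ affineLine F x δ :=
  subset_span (by simp)

theorem exists_eq_smul_of_affineLine_eq {x δ x' δ' : K}
    (h : affineLine F x δ = affineLine F x' δ') :
    (∃ s : F, δ' = s • δ) ∧ ∃ t : F, x' = x + t • δ := by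
  have hδ := h ▸ right_mem_affineLine (F := F) x' δ'
  have hx := h ▸ left_mem_affineLine (F := F) x' δ'
  rw [mem_affineLine] at hδ hx
  simp only [zero_smul, zero_add, one_smul] at hδ hx
  exact ⟨hδ, hx⟩

theorem span_pair_eq_affineLine (x y : K) :
    span F {((x, 1) : K × F), (y, 1)} = affineLine F x (y - x) := by
  rw [span_pair_eq_span_pair_sub, Prod.mk_sub_mk, sub_self]
  rfl

variable (F) in
def cycleVertex (u d : K) (w : ℕ → K) : ℕ → K × F
  | 0 => (u, 0)
  | 1 => (d, 0)
  | j + 2 => (w j, 1)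

theorem cycleVertex_mem_ker_snd_iff {u d : K} {w : ℕ → K} {i : ℕ} :
    cycleVertex F u d w i ∈ LinearMap.ker (LinearMap.snd F K F) ↔ i < 2 := by
  rcases i with _ | _ | i <;> simp [cycleVertex]

theorem cycleVertex_span_ne {u d : K} {w : ℕ → K} {l : ℕ} (hdu : d ∉ span F {u})
    (hw : ∀ i j, i < j → j ≤ l → w i ≠ w j) :
    ∀ i j, i < j → j < l + 3 →
      span F {cycleVertex F u d w i} ≠ span F {cycleVertex F u d w j} := by
  intro i j hij hj h
  obtain ⟨s, hs⟩ := mem_span_singleton.1 (h ▸ mem_span_singleton_self (cycleVertex F u d w j))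
  rcases i with _ | _ | i <;> rcases j with _ | _ | j <;> simp only [cycleVertex, Prod.smul_mk,
    Prod.mk.injEq, smul_eq_mul, mul_zero, mul_one, zero_ne_one, and_false] at hs <;> try omega
  · exact hdu (mem_span_singleton.2 ⟨s, hs.1⟩)
  · exact hw i j (by omega) (by omega) (by rw [← hs.1, hs.2, one_smul])

theorem span_cycleVertex_one (u d : K) (w : ℕ → K) :
    span F {cycleVertex F u d w 1, cycleVertex F u d w (1 + 1)} = affineLine F (w 0) d :=
  congrArg (span F) (Set.pair_comm _ _)

theorem span_cycleVertex_add_two (u d : K) (w : ℕ → K) (j : ℕ) :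
    span F {cycleVertex F u d w (j + 2), cycleVertex F u d w (j + 2 + 1)} =
      affineLine F (w j) (w (j + 1) - w j) :=
  span_pair_eq_affineLine _ _

theorem span_cycleVertex_closing (u d : K) (w : ℕ → K) (l : ℕ) :
    span F {cycleVertex F u d w (l + 2), cycleVertex F u d w 0} = affineLine F (w l) u :=
  rfl

theorem span_cycleVertex_zero_le_ker_snd (u d : K) (w : ℕ → K) :
    span F {cycleVertex F u d w 0, cycleVertex F u d w 1} ≤
      LinearMap.ker (LinearMap.snd F K F) := by
  rw [span_le, Set.insert_subset_iff, Set.singleton_subset_iff]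
  exact ⟨cycleVertex_mem_ker_snd_iff.2 (by omega), cycleVertex_mem_ker_snd_iff.2 (by omega)⟩

theorem cycleVertex_pathEdge_ne {u d : K} {w : ℕ → K} {l : ℕ}
    (hchord : ∀ i j, i < j → j < l →
      affineLine F (w i) (w (i + 1) - w i) ≠ affineLine F (w j) (w (j + 1) - w j))
    (hfirst : ∀ j < l, affineLine F (w 0) d ≠ affineLine F (w j) (w (j + 1) - w j)) :
    ∀ i j, i < j → j < l + 2 →
      span F {cycleVertex F u d w i, cycleVertex F u d w (i + 1)} ≠
        span F {cycleVertex F u d w j, cycleVertex F u d w (j + 1)} := by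
  intro i j hij hj h
  obtain rfl | rfl | ⟨i, rfl⟩ : i = 0 ∨ i = 1 ∨ ∃ i', i = i' + 2 := by
    rcases i with _ | _ | i <;> simp
  · have hmem : cycleVertex F u d w (j + 1) ∈
        span F {cycleVertex F u d w 0, cycleVertex F u d w (0 + 1)} :=
      h ▸ subset_span (by simp)
    exact absurd (cycleVertex_mem_ker_snd_iff.1 (span_cycleVertex_zero_le_ker_snd u d w hmem))
      (by omega)
  all_goals obtain ⟨j, rfl⟩ : ∃ j', j = j' + 2 := ⟨j - 2, by omega⟩
  · rw [span_cycleVertex_one, span_cycleVertex_add_two] at h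
    exact hfirst j (by omega) h
  · rw [span_cycleVertex_add_two, span_cycleVertex_add_two] at h
    exact hchord i j (by omega) (by omega) h

theorem cycleVertex_pathEdge_ne_closing {u d : K} {w : ℕ → K} {l : ℕ}
    (hlast : ∀ j < l, affineLine F (w l) u ≠ affineLine F (w j) (w (j + 1) - w j))
    (hfl : affineLine F (w 0) d ≠ affineLine F (w l) u) :
    ∀ i < l + 2, span F {cycleVertex F u d w i, cycleVertex F u d w (i + 1)} ≠
        span F {cycleVertex F u d w (l + 2), cycleVertex F u d w 0} := by
  intro i hi h
  rw [span_cycleVertex_closing] at h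
  obtain rfl | rfl | ⟨i, rfl⟩ : i = 0 ∨ i = 1 ∨ ∃ i', i = i' + 2 := by
    rcases i with _ | _ | i <;> simp
  · have hmem : cycleVertex F u d w (l + 2) ∈
        span F {cycleVertex F u d w 0, cycleVertex F u d w (0 + 1)} :=
      h ▸ left_mem_affineLine (w l) u
    exact absurd (cycleVertex_mem_ker_snd_iff.1 (span_cycleVertex_zero_le_ker_snd u d w hmem))
      (by omega)
  · rw [span_cycleVertex_one] at h
    exact hfl h
  · rw [span_cycleVertex_add_two] at h
    exact hlast i (by omega) h.symm

end ProjectiveModel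

section PowerPath

variable {F K : Type*} [Field F] [Field K] [Algebra F K] {g : K}

def pathPoint (g : K) : ℕ → K
  | 0 => 0
  | j + 1 => g ^ (j + 1)

theorem pathPoint_of_ne_zero {j : ℕ} (hj : j ≠ 0) : pathPoint g j = g ^ j := by
  obtain ⟨j, rfl⟩ := Nat.exists_eq_succ_of_ne_zero hj
  rfl

theorem affineLine_pathPoint_of_ne_zero {j : ℕ} (hj : j ≠ 0) :
    affineLine F (pathPoint g j) (pathPoint g (j + 1) - pathPoint g j) =
      affineLine F (g ^ j) (g ^ j * (g - 1)) := by
  rw [pathPoint_of_ne_zero hj, pathPoint_of_ne_zero j.succ_ne_zero, pow_succ, mul_sub, mul_one]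

theorem eq_zero_of_algebraMap_eq_one_add_mul (hg : LinearIndependent F ![1, g]) {s t : F}
    (h : algebraMap F K s = 1 + algebraMap F K t * (g - 1)) : t = 0 := by
  refine (LinearIndependent.pair_iff.1 hg (1 - t - s) t ?_).2
  simp only [Algebra.smul_def, map_sub, map_one]
  linear_combination -h

theorem zero_notMem_affineLine_pathPoint (hg : LinearIndependent F ![1, g]) {c : ℕ}
    (hc : c ≠ 0) :
    ((0 : K), (1 : F)) ∉
      affineLine F (pathPoint g c) (pathPoint g (c + 1) - pathPoint g c) := by
  have hg0 : g ≠ 0 := by simpa using hg.ne_zero 1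
  rw [affineLine_pathPoint_of_ne_zero hc, mem_affineLine]
  rintro ⟨t, ht⟩
  have ht' : g ^ c * algebraMap F K 0 = g ^ c * (1 + algebraMap F K t * (g - 1)) := by
    rw [one_smul, Algebra.smul_def] at ht
    rw [map_zero]
    linear_combination ht
  have ht0 := eq_zero_of_algebraMap_eq_one_add_mul hg (mul_left_cancel₀ (pow_ne_zero c hg0) ht')
  simp [ht0] at ht'
  exact pow_ne_zero c hg0 ht'.symm

theorem pathPoint_ne_pathPoint (hg0 : g ≠ 0) {i j : ℕ} (hij : i < j) (hj : j ≤ orderOf g) :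
    pathPoint g i ≠ pathPoint g j := by
  rw [pathPoint_of_ne_zero (by omega : j ≠ 0)]
  rcases i with _ | i
  · exact (pow_ne_zero j hg0).symm
  · rw [pathPoint_of_ne_zero i.succ_ne_zero]
    exact pow_ne_pow_of_sub_lt_orderOf hg0 hij (by omega)

theorem affineLine_pathPoint_ne (hg : LinearIndependent F ![1, g]) {i j : ℕ} (hij : i < j)
    (hj : j < orderOf g) :
    affineLine F (pathPoint g i) (pathPoint g (i + 1) - pathPoint g i) ≠
      affineLine F (pathPoint g j) (pathPoint g (j + 1) - pathPoint g j) := by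
  intro h
  rcases Nat.eq_zero_or_pos i with rfl | hi
  · exact zero_notMem_affineLine_pathPoint hg (by omega) (h ▸ left_mem_affineLine _ _)
  have hg0 : g ≠ 0 := by simpa using hg.ne_zero 1
  have hg1 : g - 1 ≠ 0 :=
    sub_ne_zero.2 fun h1 => (LinearIndependent.pair_iff' one_ne_zero).1 hg 1 (by rw [one_smul, h1])
  rw [affineLine_pathPoint_of_ne_zero hi.ne', affineLine_pathPoint_of_ne_zero (by omega)] at h
  obtain ⟨⟨s, hs⟩, ⟨t, ht⟩⟩ := exists_eq_smul_of_affineLine_eq h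
  rw [Algebra.smul_def] at hs ht
  have hj' : g ^ j = g ^ i * g ^ (j - i) := by rw [← pow_add, Nat.add_sub_cancel' hij.le]
  have hs' : g ^ i * (g - 1) * g ^ (j - i) = g ^ i * (g - 1) * algebraMap F K s := by
    linear_combination hs - (g - 1) * hj'
  have ht' : g ^ i * g ^ (j - i) = g ^ i * (1 + algebraMap F K t * (g - 1)) := by
    linear_combination ht - hj'
  have hst := (mul_left_cancel₀ (mul_ne_zero (pow_ne_zero i hg0) hg1) hs').symm.trans
    (mul_left_cancel₀ (pow_ne_zero i hg0) ht')
  rw [eq_zero_of_algebraMap_eq_one_add_mul hg hst, map_zero, zero_mul, add_zero] at ht'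
  exact pow_ne_one_of_lt_orderOf (by omega) (by omega)
    (mul_left_cancel₀ (pow_ne_zero i hg0) ht')

theorem card_le_of_forall_mem_affineLine_pathPoint [Fintype F] (hg : LinearIndependent F ![1, g])
    {l : ℕ} (hl : l ≤ orderOf g) (A : Finset ℕ)
    (hA : ∀ j ∈ A, j < l ∧ ((pathPoint g l, (1 : F)) ∈
      affineLine F (pathPoint g j) (pathPoint g (j + 1) - pathPoint g j))) :
    #A ≤ Fintype.card F := by
  classical
  have hg0 : g ≠ 0 := by simpa using hg.ne_zero 1
  have hmaps : ∀ j ∈ A.erase 0, g ^ (l - j) ∈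
      (univ.erase (0 : F)).image fun t => 1 + algebraMap F K t * (g - 1) := by
    intro j hj
    obtain ⟨hj0, hjA⟩ := mem_erase.1 hj
    obtain ⟨hjl, hmem⟩ := hA j hjA
    rw [affineLine_pathPoint_of_ne_zero hj0, pathPoint_of_ne_zero (by omega),
      mem_affineLine] at hmem
    obtain ⟨t, ht⟩ := hmem
    have ht' : g ^ j * g ^ (l - j) = g ^ j * (1 + algebraMap F K t * (g - 1)) := by
      rw [← pow_add, Nat.add_sub_cancel' hjl.le, ht, one_smul, Algebra.smul_def]
      ring
    have hpow := mul_left_cancel₀ (pow_ne_zero j hg0) ht'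
    refine mem_image.2 ⟨t, mem_erase.2 ⟨?_, mem_univ _⟩, hpow.symm⟩
    rintro rfl
    rw [map_zero, zero_mul, add_zero] at hpow
    exact pow_ne_one_of_lt_orderOf (by omega) (by omega) hpow
  have hinj : Set.InjOn (fun j => g ^ (l - j)) (A.erase 0) := by
    intro i hi j hj hij
    have hi' := hA i (mem_of_mem_erase hi)
    have hj' := hA j (mem_of_mem_erase hj)
    have := pow_injOn_Iio_orderOf (x := g)
      (by simp only [Set.mem_Iio]; have := ne_of_mem_erase hi; omega)
      (by simp only [Set.mem_Iio]; have := ne_of_mem_erase hj; omega) hij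
    omega
  have hcard := (card_le_card_of_injOn _ hmaps hinj).trans card_image_le
  rw [card_erase_of_mem (mem_univ _), card_univ] at hcard
  have := pred_card_le_card_erase (s := A) (a := 0)
  have := Fintype.card_pos (α := F)
  omega

end PowerPath

section Model

variable {F K : Type*} [Field F] [Field K] [Algebra F K] [Fintype F] [Fintype K] {g : K}

theorem exists_directions_pathPoint (hK : Fintype.card F ^ 2 ≤ Fintype.card K)
    (hg : LinearIndependent F ![1, g]) {l : ℕ} (hl : l ≤ orderOf g) :
    ∃ u d : K, u ≠ 0 ∧ d ∉ span F {u} ∧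
      (∀ j < l, affineLine F (pathPoint g 0) d ≠
        affineLine F (pathPoint g j) (pathPoint g (j + 1) - pathPoint g j)) ∧
      (∀ j < l, affineLine F (pathPoint g l) u ≠
        affineLine F (pathPoint g j) (pathPoint g (j + 1) - pathPoint g j)) ∧
      affineLine F (pathPoint g 0) d ≠ affineLine F (pathPoint g l) u := by
  classical
  have hq := Fintype.one_lt_card (α := F)
  have avoid : ∀ B : Finset K, #B ≤ Fintype.card F →
      ∃ u : K, u ≠ 0 ∧ ∀ b ∈ B, u ∉ span F {b} :=
    fun B hB => exists_ne_zero_forall_notMem_span_singleton B (by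
      have : #B * (Fintype.card F - 1) ≤ Fintype.card F * (Fintype.card F - 1) :=
        Nat.mul_le_mul_right _ hB
      have : Fintype.card F * (Fintype.card F - 1) + Fintype.card F = Fintype.card F ^ 2 := by
        rw [sq, ← Nat.mul_succ, Nat.succ_eq_add_one, Nat.sub_add_cancel hq.le]
      omega)
  set w := pathPoint g
  set A := (range l).filter fun j => (w l, (1 : F)) ∈ affineLine F (w j) (w (j + 1) - w j)
  obtain ⟨u, hu0, hu⟩ := avoid (A.image fun j => w (j + 1) - w j) (card_image_le.trans
    (card_le_of_forall_mem_affineLine_pathPoint hg hl A fun j hj => by simpa [A] using hj))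
  obtain ⟨d, -, hd⟩ := avoid {g, u} ((card_insert_le _ _).trans (by rw [card_singleton]; omega))
  have hdu : d ∉ span F {u} := hd u (by simp)
  refine ⟨u, d, hu0, hdu, fun j hj h => ?_, fun j hj h => ?_, fun h => ?_⟩
  · rcases j with _ | j
    · obtain ⟨t, ht⟩ := mem_affineLine.1 (h ▸ right_mem_affineLine (F := F) (w 0) d)
      exact hd g (by simp) (mem_span_singleton.2 ⟨t, by simpa [w, pathPoint] using ht.symm⟩)
    · exact zero_notMem_affineLine_pathPoint hg j.succ_ne_zero (h ▸ left_mem_affineLine _ _)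
  · obtain ⟨t, ht⟩ := mem_affineLine.1 (h ▸ right_mem_affineLine (F := F) (w l) u)
    refine hu _
      (mem_image_of_mem _ (mem_filter.2 ⟨mem_range.2 hj, h ▸ left_mem_affineLine _ _⟩))
      (mem_span_singleton.2 ⟨t, ?_⟩)
    simpa using ht.symm
  · obtain ⟨⟨s, hs⟩, -⟩ := exists_eq_smul_of_affineLine_eq h.symm
    exact hdu (mem_span_singleton.2 ⟨s, hs.symm⟩)

theorem exists_isCycleMeetingInEdge_prod (hK : Fintype.card F ^ 2 ≤ Fintype.card K) {k : ℕ}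
    (hk : 3 ≤ k) (hk' : k ≤ Fintype.card K + 2) :
    ∃ f : Fin k → Submodule F (K × F),
      IsCycleMeetingInEdge (LinearMap.ker (LinearMap.snd F K F)) (by omega) f := by
  obtain ⟨l, rfl⟩ : ∃ l, k = l + 3 := ⟨k - 3, by omega⟩
  obtain ⟨g, hg, hord⟩ := FiniteField.exists_linearIndependent_one_orderOf_eq (F := F) (K := K)
    (by nlinarith [Fintype.one_lt_card (α := F)])
  have hl : l ≤ orderOf g := by omega
  obtain ⟨u, d, hu0, hdu, hfirst, hlast, hfl⟩ := exists_directions_pathPoint hK hg hl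
  have hd0 : d ≠ 0 := fun h => hdu (h ▸ zero_mem _)
  refine ⟨_, isCycleMeetingInEdge_span_singleton hk (cycleVertex F u d (pathPoint g)) ?_
    (cycleVertex_span_ne hdu fun i j hij hj =>
      pathPoint_ne_pathPoint (by simpa using hg.ne_zero 1) hij (hj.trans hl))
    (fun i j hij hj => cycleVertex_pathEdge_ne
      (fun i j hij hj => affineLine_pathPoint_ne (i := i) (j := j) hg hij (by omega)) hfirst
      i j hij (by omega))
    (fun i hi => cycleVertex_pathEdge_ne_closing hlast hfl i (by omega))
    fun i _ => cycleVertex_mem_ker_snd_iff⟩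
  intro i _
  rcases i with _ | _ | i <;> simp [cycleVertex, hu0, hd0]

end Model

/-- Let S ≅ PG(n-1,q) be a hyperplane of PG(n,q), n ≥ 2. For every k with 3 ≤ k ≤ qⁿ + 2
there is a k-cycle embedded in PG(n,q) (distinct points with pairwise distinct connecting
lines, indices mod k) having exactly two of its vertices in S and exactly one of its edges
contained in S. -/
theorem cycle_meeting_hyperplane_in_edge (q n k : ℕ) (F : Type*) [Field F] [Fintype F]
    (hq : Fintype.card F = q) (hn : 2 ≤ n)
    (S : Submodule F (Fin (n + 1) → F)) (hS : finrank F S = n)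
    (hk : 3 ≤ k) (hk' : k ≤ q ^ n + 2) :
    ∃ f : Fin k → Submodule F (Fin (n + 1) → F),
      (∀ i, finrank F (f i) = 1) ∧
      Function.Injective f ∧
      Function.Injective (fun i : Fin k => f i ⊔ f (i + ⟨1, by omega⟩)) ∧
      {i : Fin k | f i ≤ S}.ncard = 2 ∧
      {i : Fin k | f i ⊔ f (i + ⟨1, by omega⟩) ≤ S}.ncard = 1 := by
  obtain ⟨K, _, _, _, hK⟩ := FiniteField.exists_algebra_card_eq_pow F (n := n) (by omega)
  have hKrank : finrank F K = n :=
    Nat.pow_right_injective Fintype.one_lt_card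
      (show Fintype.card F ^ finrank F K = Fintype.card F ^ n by rw [← card_eq_pow_finrank, hK])
  obtain ⟨f, hf⟩ := exists_isCycleMeetingInEdge_prod (F := F) (K := K)
    (by rw [hK]; exact Nat.pow_le_pow_right Fintype.card_pos hn) hk (by rwa [hK, hq])
  obtain ⟨e, he⟩ := Submodule.exists_linearEquiv_map_eq
    (p := LinearMap.ker (LinearMap.snd F K F)) (p' := S)
    (by rw [finrank_prod, hKrank, finrank_self, finrank_fin_fun])
    (by rw [LinearMap.ker_snd, LinearMap.finrank_range_of_inj LinearMap.inl_injective, hKrank, hS])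
  exact ⟨_, he ▸ hf.map e⟩
end

section
/- For every k with 3 ≤ k ≤ q^2 and for any fixed point O of the affine plane AG(2,q), there exists an embedded k-cycle in AG(2,q) such that either (a) O is a vertex of the cycle and at least one line through O is not an edge of the cycle, or (b) O is not a vertex, k = t(q+1) for some 1 ≤ t ≤ q-1, and no line through O is an edge of the cycle. -/
open Module

/-!
Identify AG(2,q) with the quadratic extension `K` of `F = 𝔽_q`, with `O` at `0`, and let `β`
generate `Kˣ`. The powers of `β` lying in `F` are exactly the powers of `β ^ (q + 1)`, so the
lines through `0` and `β ^ a`, `0` and `β ^ b` coincide iff `a ≡ b [MOD q + 1]`. Since `β ∉ F`,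
the lines joining `x` and `x * β` (`x ≠ 0`) avoid `0` and are pairwise distinct. Hence the cycle
`0, 1, β, …, β ^ (k - 2)` is embedded unless `q + 1 ∣ k - 2`; in that case the edge from `β` is
redirected to `β ^ (q + 2)`, which lies on the line through `0` and `β`, and the later exponents
are shifted by `q`. At most three lines through `0` are edges, which leaves one free, so
alternative (a) always holds.
-/

open Function Set

section Lines

variable {F V : Type*} [Field F] [AddCommGroup V] [Module F V]

lemma mem_line_iff {x y z : V} : z ∈ line[F, x, y] ↔ ∃ r : F, r • (y - x) = z - x := by
  simpa [vsub_eq_sub, vadd_eq_add] using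
    vadd_left_mem_affineSpan_pair (k := F) (p₁ := x) (p₂ := y) (v := z - x)

lemma line_zero_eq_iff {x y : V} : line[F, 0, x] = line[F, 0, y] ↔ ∃ u : Fˣ, u • x = y := by
  rw [AffineSubspace.eq_iff_direction_eq_of_mem (left_mem_affineSpan_pair F 0 x)
    (left_mem_affineSpan_pair F 0 y), direction_affineSpan, direction_affineSpan,
    vectorSpan_pair_rev, vectorSpan_pair_rev, vsub_eq_sub, vsub_eq_sub, sub_zero, sub_zero,
    Submodule.span_singleton_eq_span_singleton]

lemma line_smul_eq_line_zero {x : V} {c : F} (hc : c ≠ 1) : line[F, x, c • x] = line[F, 0, x] := by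
  rw [AffineSubspace.eq_iff_direction_eq_of_mem (left_mem_affineSpan_pair F x (c • x))
    (right_mem_affineSpan_pair F 0 x), direction_affineSpan, direction_affineSpan,
    vectorSpan_pair_rev, vectorSpan_pair_rev, vsub_eq_sub, vsub_eq_sub, sub_zero,
    show c • x - x = (c - 1) • x by rw [sub_smul, one_smul],
    Submodule.span_singleton_smul_eq (sub_ne_zero.2 hc).isUnit]

end Lines

/-- The vertices are `v 0, …, v (k - 1)`; `v k = v 0` closes the cycle, so that edge `n < k` is
always the line through `v n` and `v (n + 1)`. -/
structure IsEmbeddedCycle (F : Type*) {V P : Type*} [Ring F] [AddCommGroup V] [Module F V]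
    [AddTorsor V P] (k : ℕ) (v : ℕ → P) : Prop where
  closed : v k = v 0
  injOn_vertex : InjOn v (Iio k)
  injOn_edge : InjOn (fun n => line[F, v n, v (n + 1)]) (Iio k)

section Cycle

variable {F V P Q W : Type*} [Ring F] [AddCommGroup V] [Module F V] [AddTorsor V P]
  [AddCommGroup W] [Module F W] [AddTorsor W Q]

lemma AffineEquiv.line_eq_line_iff (φ : P ≃ᵃ[F] Q) {x y x' y' : P} :
    line[F, φ x, φ y] = line[F, φ x', φ y'] ↔ line[F, x, y] = line[F, x', y'] := by
  have key : ∀ a b : P, line[F, φ a, φ b] = (line[F, a, b]).map (φ : P →ᵃ[F] Q) := by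
    intro a b
    rw [AffineSubspace.map_span, image_pair]
    rfl
  rw [key, key]
  exact (AffineSubspace.gciMapComap φ.injective).l_injective.eq_iff

lemma IsEmbeddedCycle.map {k : ℕ} {v : ℕ → P} (hv : IsEmbeddedCycle F k v) (φ : P ≃ᵃ[F] Q) :
    IsEmbeddedCycle F k (φ ∘ v) where
  closed := by simp [hv.closed]
  injOn_vertex := φ.injective.comp_injOn hv.injOn_vertex
  injOn_edge n hn m hm h := hv.injOn_edge hn hm (φ.line_eq_line_iff.1 h)

lemma IsEmbeddedCycle.apply_fin_succ {k : ℕ} {v : ℕ → P} (hv : IsEmbeddedCycle F k v)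
    (hk : 1 < k) (i : Fin k) : v ↑(i + ⟨1, hk⟩) = v (i + 1) := by
  change v ((i.val + 1) % k) = _
  rcases (show i.val + 1 ≤ k from i.isLt).lt_or_eq with h | h
  · rw [Nat.mod_eq_of_lt h]
  · rw [h, Nat.mod_self, hv.closed]

lemma IsEmbeddedCycle.injective_fin {k : ℕ} {v : ℕ → P} (hv : IsEmbeddedCycle F k v)
    (hk : 1 < k) :
    Injective (fun i : Fin k => v i) ∧
      Injective (fun i : Fin k => line[F, v i, v ↑(i + ⟨1, hk⟩)]) := by
  refine ⟨fun i j h => Fin.ext (hv.injOn_vertex i.isLt j.isLt h), fun i j h => ?_⟩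
  simp only [hv.apply_fin_succ] at h
  exact Fin.ext (hv.injOn_edge i.isLt j.isLt h)

end Cycle

lemma Finset.exists_forall_not_modEq {ι : Type*} (s : Finset ι) (a : ι → ℕ) {m : ℕ}
    (h : s.card < m) : ∃ c, ∀ i ∈ s, ¬ c ≡ a i [MOD m] := by
  classical
  obtain ⟨c, hc, hcs⟩ := Finset.exists_mem_notMem_of_card_lt_card
    ((Finset.card_image_le (s := s) (f := (a · % m))).trans_lt
      (h.trans_eq (Finset.card_range m).symm))
  refine ⟨c, fun i hi hci => hcs (Finset.mem_image.2 ⟨i, hi, ?_⟩)⟩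
  exact (Eq.symm hci : a i % m = c % m).trans (Nat.mod_eq_of_lt (Finset.mem_range.1 hc))

section Extension

variable {F K : Type*} [Field F] [Field K] [Algebra F K] {β : K}

lemma eq_zero_of_smul_eq_algebraMap (hβ : β ∉ range (algebraMap F K)) {r s : F}
    (h : r • β = algebraMap F K s) : r = 0 := by
  by_contra hr
  exact hβ ⟨r⁻¹ * s, by rw [map_mul, ← h, Algebra.smul_def, ← mul_assoc, ← map_mul,
    inv_mul_cancel₀ hr, map_one, one_mul]⟩

lemma zero_notMem_line_mul (hβ : β ∉ range (algebraMap F K)) {x : K} (hx : x ≠ 0) :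
    (0 : K) ∉ line[F, x, x * β] := by
  rw [mem_line_iff]
  rintro ⟨r, hr⟩
  have : r • β = algebraMap F K (r - 1) := by
    apply mul_left_cancel₀ hx
    rw [Algebra.smul_def] at hr ⊢
    rw [map_sub, map_one]
    linear_combination hr
  have hr0 := eq_zero_of_smul_eq_algebraMap hβ this
  simp [hr0] at hr
  exact hx hr

lemma eq_of_line_mul_eq (hβ : β ∉ range (algebraMap F K)) {x y : K} (hx : x ≠ 0)
    (h : line[F, x, x * β] = line[F, y, y * β]) : x = y := by
  obtain ⟨r, hr⟩ := mem_line_iff.1 (h ▸ left_mem_affineSpan_pair F y (y * β))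
  obtain ⟨s, hs⟩ := mem_line_iff.1 (h ▸ right_mem_affineSpan_pair F y (y * β))
  have hβ1 : β - 1 ≠ 0 := sub_ne_zero.2 fun h1 => hβ ⟨1, by rw [map_one, h1]⟩
  have : r • β = algebraMap F K (s - 1) := by
    apply mul_left_cancel₀ (mul_ne_zero hx hβ1)
    rw [Algebra.smul_def] at hr hs ⊢
    rw [map_sub, map_one]
    linear_combination β * hr - hs
  rw [eq_zero_of_smul_eq_algebraMap hβ this, zero_smul] at hr
  exact sub_eq_zero.1 hr.symm |>.symm

section Powers

variable {m : ℕ} (hβ : ∀ n, β ^ n ∈ range (algebraMap F K) ↔ m ∣ n)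
include hβ

lemma notMem_range_of_pow_mem_range_iff (hm : 1 < m) : β ∉ range (algebraMap F K) := by
  rw [← pow_one β, hβ]
  exact Nat.not_dvd_of_pos_of_lt one_pos hm

lemma ne_zero_of_pow_mem_range_iff (hm : 1 < m) : β ≠ 0 := fun h =>
  notMem_range_of_pow_mem_range_iff hβ hm ⟨0, by rw [h, map_zero]⟩

lemma modEq_of_line_zero_pow_eq (hβ0 : β ≠ 0) {a b : ℕ}
    (h : line[F, 0, β ^ a] = line[F, 0, β ^ b]) : a ≡ b [MOD m] := by
  wlog hab : a ≤ b generalizing a b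
  · exact (this h.symm (le_of_not_ge hab)).symm
  obtain ⟨u, hu⟩ := line_zero_eq_iff.1 h
  rw [Nat.modEq_iff_dvd' hab, ← hβ]
  refine ⟨u, mul_right_cancel₀ (pow_ne_zero a hβ0) ?_⟩
  rw [← Algebra.smul_def, ← pow_add, Nat.sub_add_cancel hab]
  exact hu

end Powers

section PowCycle

def powCycle (β : K) (k : ℕ) (E : ℕ → ℕ) (n : ℕ) : K := if n = 0 ∨ n = k then 0 else β ^ E n

variable {k : ℕ} {E : ℕ → ℕ}

lemma powCycle_of_mem {n : ℕ} (hn : n ∈ Ioo 0 k) : powCycle β k E n = β ^ E n :=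
  if_neg (by grind)

lemma line_powCycle_zero (hk : 1 < k) :
    line[F, powCycle β k E 0, powCycle β k E (0 + 1)] = line[F, 0, β ^ E 1] := by
  rw [zero_add, powCycle_of_mem ⟨one_pos, hk⟩, powCycle, if_pos (Or.inl rfl)]

lemma line_powCycle_last (hk : 1 < k) :
    line[F, powCycle β k E (k - 1), powCycle β k E (k - 1 + 1)] = line[F, 0, β ^ E (k - 1)] := by
  rw [Nat.sub_add_cancel hk.le, powCycle_of_mem ⟨by omega, by omega⟩, powCycle,
    if_pos (Or.inr rfl), pair_comm]

lemma injOn_powCycle (hβ0 : β ≠ 0) (hE : InjOn E (Ioo 0 k))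
    (hEN : ∀ n ∈ Ioo 0 k, E n < orderOf β) : InjOn (powCycle β k E) (Iio k) := by
  intro n hn n' hn' h
  have hpow : ∀ {n}, n < k → 0 < n → powCycle β k E n = β ^ E n := fun hn hn0 =>
    powCycle_of_mem ⟨hn0, hn⟩
  rcases Nat.eq_zero_or_pos n with rfl | hn0 <;> rcases Nat.eq_zero_or_pos n' with rfl | hn'0
  · rfl
  · exact absurd (h.symm.trans (by simp [powCycle])) (hpow hn' hn'0 ▸ pow_ne_zero _ hβ0)
  · exact absurd (h.trans (by simp [powCycle])) (hpow hn hn0 ▸ pow_ne_zero _ hβ0)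
  · rw [hpow hn hn0, hpow hn' hn'0] at h
    exact hE ⟨hn0, hn⟩ ⟨hn'0, hn'⟩ (pow_injOn_Iio_orderOf (hEN n ⟨hn0, hn⟩) (hEN n' ⟨hn'0, hn'⟩) h)

lemma powCycle_succ_of_notMem (hβ0 : β ≠ 0) {Z : Finset ℕ} (h0 : 0 ∈ Z) (hlast : k - 1 ∈ Z)
    (hstep : ∀ n ∈ Ioo 0 (k - 1), n ∉ Z → E (n + 1) = E n + 1) {n : ℕ} (hn : n < k)
    (hnZ : n ∉ Z) :
    powCycle β k E n ≠ 0 ∧ powCycle β k E (n + 1) = powCycle β k E n * β := by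
  have hn' : n ∈ Ioo 0 (k - 1) := ⟨Nat.pos_of_ne_zero (by grind), by grind⟩
  rw [powCycle_of_mem ⟨hn'.1, hn⟩, powCycle_of_mem ⟨by omega, by grind⟩, hstep n hn' hnZ, pow_succ]
  exact ⟨pow_ne_zero _ hβ0, rfl⟩

variable {m : ℕ} (hβ : ∀ n, β ^ n ∈ range (algebraMap F K) ↔ m ∣ n) (hm : 1 < m)
  {Z : Finset ℕ} {a : ℕ → ℕ}
  (hZ : ∀ n ∈ Z, line[F, powCycle β k E n, powCycle β k E (n + 1)] = line[F, 0, β ^ a n])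
  (hstep : ∀ n ∈ Ioo 0 (k - 1), n ∉ Z → E (n + 1) = E n + 1)
  (h0 : 0 ∈ Z) (hlast : k - 1 ∈ Z)
include hβ hm hZ hstep h0 hlast

theorem isEmbeddedCycle_powCycle (hE : InjOn E (Ioo 0 k))
    (hEN : ∀ n ∈ Ioo 0 k, E n < orderOf β) (ha : InjOn (fun n => a n % m) Z) :
    IsEmbeddedCycle F k (powCycle β k E) := by
  have hβF := notMem_range_of_pow_mem_range_iff hβ hm
  have hβ0 := ne_zero_of_pow_mem_range_iff hβ hm
  have hvertex := injOn_powCycle hβ0 hE hEN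
  have hzero : ∀ n ∈ Z, (0 : K) ∈ line[F, powCycle β k E n, powCycle β k E (n + 1)] :=
    fun n hn => hZ n hn ▸ left_mem_affineSpan_pair F 0 _
  refine ⟨by simp [powCycle], hvertex, fun n hn n' hn' h => ?_⟩
  dsimp only at h
  by_cases hnZ : n ∈ Z <;> by_cases hn'Z : n' ∈ Z
  · rw [hZ n hnZ, hZ n' hn'Z] at h
    exact ha hnZ hn'Z (modEq_of_line_zero_pow_eq hβ hβ0 h)
  · obtain ⟨hv0, hv⟩ := powCycle_succ_of_notMem hβ0 h0 hlast hstep hn' hn'Z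
    exact (zero_notMem_line_mul hβF hv0 (hv ▸ h ▸ hzero n hnZ)).elim
  · obtain ⟨hv0, hv⟩ := powCycle_succ_of_notMem hβ0 h0 hlast hstep hn hnZ
    exact (zero_notMem_line_mul hβF hv0 (hv ▸ h.symm ▸ hzero n' hn'Z)).elim
  · obtain ⟨hv0, hv⟩ := powCycle_succ_of_notMem hβ0 h0 hlast hstep hn hnZ
    obtain ⟨-, hv'⟩ := powCycle_succ_of_notMem hβ0 h0 hlast hstep hn' hn'Z
    rw [hv, hv'] at h
    exact hvertex hn hn' (eq_of_line_mul_eq hβF hv0 h)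

theorem exists_line_zero_ne_powCycle (hcard : Z.card < m) :
    ∃ B ≠ 0, ∀ n < k, line[F, 0, B] ≠ line[F, powCycle β k E n, powCycle β k E (n + 1)] := by
  have hβF := notMem_range_of_pow_mem_range_iff hβ hm
  have hβ0 := ne_zero_of_pow_mem_range_iff hβ hm
  obtain ⟨c, hc⟩ := Z.exists_forall_not_modEq a hcard
  refine ⟨β ^ c, pow_ne_zero c hβ0, fun n hn h => ?_⟩
  by_cases hnZ : n ∈ Z
  · exact hc n hnZ (modEq_of_line_zero_pow_eq hβ hβ0 (h.trans (hZ n hnZ)))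
  · obtain ⟨hv0, hv⟩ := powCycle_succ_of_notMem hβ0 h0 hlast hstep hn hnZ
    exact zero_notMem_line_mul hβF hv0 (hv ▸ h ▸ left_mem_affineSpan_pair F 0 (β ^ c))

end PowCycle

section FiniteField

lemma exists_orderOf_eq_and_pow_mem_range_iff [Fintype F] [Finite K] {q : ℕ}
    (hF : Fintype.card F = q) (hK : Nat.card K = q ^ 2) :
    ∃ β : K, orderOf β = q ^ 2 - 1 ∧ ∀ n, β ^ n ∈ range (algebraMap F K) ↔ q + 1 ∣ n := by
  have hq : 0 < q - 1 := Nat.sub_pos_of_lt (hF ▸ Fintype.one_lt_card)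
  have hN : q ^ 2 - 1 = (q + 1) * (q - 1) := by rw [← Nat.sq_sub_sq, one_pow]
  obtain ⟨g, hg⟩ := IsCyclic.exists_ofOrder_eq_natCard (α := Kˣ)
  rw [Nat.card_units, hK] at hg
  refine ⟨g, by rw [orderOf_units, hg], fun n => ⟨?_, ?_⟩⟩
  · rintro ⟨c, hc⟩
    have hc0 : c ≠ 0 := by
      rintro rfl
      exact pow_ne_zero n g.ne_zero (by rw [← hc, map_zero])
    have h1 : (g : K) ^ (n * (q - 1)) = 1 := by
      rw [pow_mul, ← hc, ← map_pow, ← hF, FiniteField.pow_card_sub_one_eq_one c hc0, map_one]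
    have h2 := orderOf_dvd_of_pow_eq_one h1
    rw [orderOf_units, hg, hN] at h2
    exact Nat.dvd_of_mul_dvd_mul_right hq h2
  · rintro ⟨j, rfl⟩
    refine ⟨Algebra.norm F (g : K) ^ j, ?_⟩
    rw [map_pow, FiniteField.algebraMap_norm_eq_pow, hK, Nat.card_eq_fintype_card, hF, hN,
      Nat.mul_div_cancel _ hq, pow_mul]

end FiniteField

section Construction

variable {q : ℕ} (hβ : ∀ n, β ^ n ∈ range (algebraMap F K) ↔ q + 1 ∣ n)
  (hN : orderOf β = q ^ 2 - 1) (hq : 2 ≤ q) (hk : 3 ≤ k) (hk' : k ≤ q ^ 2)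
include hβ hN hq hk hk'

theorem exists_cycle_of_not_dvd (hdvd : ¬ q + 1 ∣ k - 2) :
    ∃ v : ℕ → K, v 0 = 0 ∧ IsEmbeddedCycle F k v ∧
      ∃ B ≠ 0, ∀ n < k, line[F, 0, B] ≠ line[F, v n, v (n + 1)] := by
  set E : ℕ → ℕ := fun n => n - 1
  set a : ℕ → ℕ := fun n => if n = 0 then 0 else k - 2
  have hZ : ∀ n ∈ ({0, k - 1} : Finset ℕ),
      line[F, powCycle β k E n, powCycle β k E (n + 1)] = line[F, 0, β ^ a n] := by
    simp only [Finset.mem_insert, Finset.mem_singleton]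
    rintro n (rfl | rfl)
    · exact line_powCycle_zero (by omega)
    · have : E (k - 1) = a (k - 1) := by simp only [E, a]; split_ifs <;> omega
      rw [line_powCycle_last (by omega), this]
  have hstep : ∀ n ∈ Ioo 0 (k - 1), n ∉ ({0, k - 1} : Finset ℕ) → E (n + 1) = E n + 1 :=
    fun n hn _ => by simp only [E]; have := hn.1; omega
  have hm : 1 < q + 1 := by omega
  refine ⟨powCycle β k E, by simp [powCycle],
    isEmbeddedCycle_powCycle hβ hm hZ hstep (by simp) (by simp) ?_ ?_ ?_,
    exists_line_zero_ne_powCycle hβ hm hZ hstep (by simp) (by simp) ?_⟩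
  · intro n hn n' hn' h
    simp only [E] at h
    have := hn.1; have := hn'.1
    omega
  · intro n hn
    rw [hN]
    simp only [E]
    have := hn.2
    omega
  · have hres : (k - 2) % (q + 1) ≠ 0 := fun h => hdvd (Nat.dvd_of_mod_eq_zero h)
    have ha_last : a (k - 1) = k - 2 := if_neg (by omega)
    intro n hn n' hn' h
    simp only [Finset.coe_insert, Finset.coe_singleton, mem_insert_iff, mem_singleton_iff] at hn hn'
    rcases hn with rfl | rfl <;> rcases hn' with rfl | rfl <;>
      simp only [show a 0 = 0 from rfl, ha_last, Nat.zero_mod] at h <;> first | rfl | omega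
  · exact (Finset.card_le_two).trans_lt (by omega)

theorem exists_cycle_of_dvd (hdvd : q + 1 ∣ k - 2) :
    ∃ v : ℕ → K, v 0 = 0 ∧ IsEmbeddedCycle F k v ∧
      ∃ B ≠ 0, ∀ n < k, line[F, 0, B] ≠ line[F, v n, v (n + 1)] := by
  obtain ⟨j, hj⟩ := hdvd
  have hfac : q ^ 2 - 1 = (q + 1) * (q - 1) := by rw [← Nat.sq_sub_sq, one_pow]
  have hjq : j < q - 1 := by
    have : (q + 1) * j < (q + 1) * (q - 1) := by rw [← hj, ← hfac]; omega
    exact Nat.lt_of_mul_lt_mul_left this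
  have hj1 : 1 ≤ j := Nat.pos_of_ne_zero (by rintro rfl; omega)
  have hsq : (q + 1) * (q - 2) + q + 2 = q ^ 2 := by
    obtain ⟨r, rfl⟩ : ∃ r, q = r + 2 := ⟨q - 2, by omega⟩
    simp only [Nat.add_sub_cancel]
    ring
  have hkq : k - 2 ≤ (q + 1) * (q - 2) := by
    rw [hj]
    exact Nat.mul_le_mul_left _ (by omega)
  have hq3 : 3 ≤ q := by omega
  have hk3 : q + 1 ≤ k - 2 := hj ▸ Nat.le_mul_of_pos_right _ hj1
  have hkq' : k + q ≤ q ^ 2 := by omega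
  set E : ℕ → ℕ := fun n => if n ≤ 2 then n - 1 else n + q - 1
  set a : ℕ → ℕ := fun n => if n = 0 then 0 else if n = 2 then 1 else k + q - 2
  obtain ⟨μ, hμ⟩ := (hβ (q + 1)).2 dvd_rfl
  have hμ1 : μ ≠ 1 := by
    rintro rfl
    rw [map_one, ← pow_zero β] at hμ
    have := pow_injOn_Iio_orderOf (show q + 1 ∈ Iio (orderOf β) by rw [mem_Iio, hN]; omega)
      (show 0 ∈ Iio (orderOf β) by rw [mem_Iio, hN]; omega) hμ.symm
    omega
  have hZ : ∀ n ∈ ({0, 2, k - 1} : Finset ℕ),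
      line[F, powCycle β k E n, powCycle β k E (n + 1)] = line[F, 0, β ^ a n] := by
    simp only [Finset.mem_insert, Finset.mem_singleton]
    rintro n (rfl | rfl | rfl)
    · exact line_powCycle_zero (by omega)
    · rw [powCycle_of_mem (show 2 ∈ Ioo 0 k by simp; omega),
        powCycle_of_mem (show 2 + 1 ∈ Ioo 0 k by simp; omega)]
      show line[F, β ^ 1, β ^ (2 + 1 + q - 1)] = line[F, 0, β ^ 1]
      rw [show 2 + 1 + q - 1 = (q + 1) + 1 by omega, pow_succ _ (q + 1), ← hμ, pow_one,
        ← Algebra.smul_def]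
      exact line_smul_eq_line_zero hμ1
    · have : E (k - 1) = a (k - 1) := by simp only [E, a]; split_ifs <;> omega
      rw [line_powCycle_last (by omega), this]
  have hstep : ∀ n ∈ Ioo 0 (k - 1), n ∉ ({0, 2, k - 1} : Finset ℕ) → E (n + 1) = E n + 1 := by
    intro n hn hnZ
    simp only [Finset.mem_insert, Finset.mem_singleton, not_or] at hnZ
    have := hn.1
    simp only [E]
    split_ifs <;> omega
  have hm : 1 < q + 1 := by omega
  refine ⟨powCycle β k E, by simp [powCycle],
    isEmbeddedCycle_powCycle hβ hm hZ hstep (by simp) (by simp) ?_ ?_ ?_,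
    exists_line_zero_ne_powCycle hβ hm hZ hstep (by simp) (by simp) ?_⟩
  · intro n hn n' hn' h
    have := hn.1; have := hn'.1
    simp only [E] at h
    split_ifs at h <;> omega
  · intro n hn
    have := hn.2
    rw [hN]
    simp only [E]
    split_ifs <;> omega
  · have hres : (k + q - 2) % (q + 1) = q := by
      rw [show k + q - 2 = q + (q + 1) * j by omega, Nat.add_mul_mod_self_left,
        Nat.mod_eq_of_lt (by omega)]
    have ha_last : a (k - 1) = k + q - 2 := if_neg (by omega) |>.trans (if_neg (by omega))
    intro n hn n' hn' h
    simp only [Finset.coe_insert, Finset.coe_singleton, mem_insert_iff, mem_singleton_iff] at hn hn'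
    rcases hn with rfl | rfl | rfl <;> rcases hn' with rfl | rfl | rfl <;>
      simp only [show a 0 = 0 from rfl, show a 2 = 1 from rfl, ha_last, hres, Nat.zero_mod,
        Nat.mod_eq_of_lt hm] at h <;> first | rfl | omega
  · exact (Finset.card_le_three).trans_lt (by omega)

end Construction

theorem exists_cycle_through_zero {q k : ℕ} (hβ : ∀ n, β ^ n ∈ range (algebraMap F K) ↔ q + 1 ∣ n)
    (hN : orderOf β = q ^ 2 - 1) (hq : 2 ≤ q) (hk : 3 ≤ k) (hk' : k ≤ q ^ 2) :
    ∃ v : ℕ → K, v 0 = 0 ∧ IsEmbeddedCycle F k v ∧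
      ∃ B ≠ 0, ∀ n < k, line[F, 0, B] ≠ line[F, v n, v (n + 1)] := by
  by_cases hdvd : q + 1 ∣ k - 2
  · exact exists_cycle_of_dvd hβ hN hq hk hk' hdvd
  · exact exists_cycle_of_not_dvd hβ hN hq hk hk' hdvd

end Extension

/-- For every 3 ≤ k ≤ q² and every point O of the affine plane AG(2,q), there is an embedded
k-cycle (k distinct points whose consecutive connecting affine lines, indices mod k, are
pairwise distinct) such that either (a) O is a vertex and at least one affine line through O
is not an edge of the cycle, or (b) O is not a vertex, k = t(q+1) for some 1 ≤ t ≤ q-1, and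
no affine line through O is an edge of the cycle (equivalently, no edge passes through O). -/
theorem cycle_in_AG2_avoiding_or_through_O (q k : ℕ) (F : Type*) [Field F] [Fintype F]
    (hq : Fintype.card F = q) (hk : 3 ≤ k) (hk' : k ≤ q ^ 2)
    (O : Fin 2 → F) :
    ∃ f : Fin k → (Fin 2 → F),
      Function.Injective f ∧
      Function.Injective
        (fun i : Fin k => affineSpan F {f i, f (i + ⟨1, by omega⟩)}) ∧
      ((∃ i, f i = O) ∧
        (∃ A : Fin 2 → F, A ≠ O ∧
          ∀ i : Fin k, affineSpan F {O, A} ≠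
            affineSpan F {f i, f (i + ⟨1, by omega⟩)}) ∨
       (∀ i, f i ≠ O) ∧
        (∃ t, 1 ≤ t ∧ t ≤ q - 1 ∧ k = t * (q + 1)) ∧
        (∀ i : Fin k, O ∉ affineSpan F {f i, f (i + ⟨1, by omega⟩)})) := by
  obtain ⟨p, _, -, hp, -⟩ := FiniteField.card' F
  have : Fact p.Prime := ⟨hp⟩
  let K := FiniteField.Extension F p 2
  have hK : Nat.card K = q ^ 2 := by
    rw [FiniteField.natCard_extension, Nat.card_eq_fintype_card, hq]
  obtain ⟨β, hN, hβ⟩ := exists_orderOf_eq_and_pow_mem_range_iff (K := K) hq hK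
  obtain ⟨v, hv0, hv, B, hB, hfree⟩ :=
    exists_cycle_through_zero hβ hN (hq ▸ Fintype.one_lt_card) hk hk'
  have hdim : finrank F K = finrank F (Fin 2 → F) := by
    simp [K, FiniteField.finrank_extension]
  let φ : K ≃ᵃ[F] (Fin 2 → F) :=
    (LinearEquiv.ofFinrankEq K (Fin 2 → F) hdim).toAffineEquiv.trans (AffineEquiv.vaddConst F O)
  have hφ0 : φ 0 = O := by simp [φ]
  obtain ⟨hinj, hedge⟩ := (hv.map φ).injective_fin (by omega)
  refine ⟨fun i => φ (v i), hinj, hedge,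
    Or.inl ⟨⟨⟨0, by omega⟩, by simp [hv0, hφ0]⟩, φ B, hφ0 ▸ φ.injective.ne hB, fun i h => ?_⟩⟩
  dsimp only at h
  rw [← hφ0, hv.apply_fin_succ] at h
  exact hfree i i.isLt (φ.line_eq_line_iff.1 h)
end
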